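/- If w ∈ W_K satisfies the twelve conditions: w(V_i) = 0 for i = 1,2,3,4; ∫₀ᵃ w(x,0) dx = 0, ∫₀ᵃ w(x,b) dx = 0, ∫₀ᵇ w(a,y) dy = 0, ∫₀ᵇ w(0,y) dy = 0; and ∫₀ᵃ (∂w/∂y)(x,0) dx = 0, ∫₀ᵃ (∂w/∂y)(x,b) dx = 0, ∫₀ᵇ (∂w/∂x)(a,y) dy = 0, ∫₀ᵇ (∂w/∂x)(0,y) dy = 0, then w is the zero polynomial. (These twelve quantities are the degrees of freedom of the plate element: vertex values, edge integrals, and edge integrals of the normal derivative, the latter agreeing up to sign with the stated derivative integrals.) -/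
import Mathlib

open MvPolynomial

/-- Membership in the shape function space `W_K = P₃ ⊕ span{x⁴, y⁴}`. -/
def memWK (w : MvPolynomial (Fin 2) ℝ) : Prop :=
  ∃ (p : MvPolynomial (Fin 2) ℝ) (c d : ℝ),
    p.totalDegree ≤ 3 ∧ w = p + C c * X 0 ^ 4 + C d * X 1 ^ 4

noncomputable def sm (i j : ℕ) : Fin 2 →₀ ℕ := Finsupp.single 0 i + Finsupp.single 1 j

lemma sm_apply0 (i j : ℕ) : sm i j 0 = i := by simp [sm, Finsupp.single_apply]
lemma sm_apply1 (i j : ℕ) : sm i j 1 = j := by simp [sm, Finsupp.single_apply]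

lemma eq_sm (v : Fin 2 →₀ ℕ) : v = sm (v 0) (v 1) := by
  ext i; fin_cases i
  · simp [sm_apply0]
  · simp [sm_apply1]

lemma sm_eq_iff (v : Fin 2 →₀ ℕ) (i j : ℕ) : sm i j = v ↔ (v 0 = i ∧ v 1 = j) := by
  constructor
  · rintro rfl; simp [sm_apply0, sm_apply1]
  · rintro ⟨h0, h1⟩; rw [eq_sm v, h0, h1]

lemma coeff_CXX (k : ℝ) (i j : ℕ) (v : Fin 2 →₀ ℕ) :
    coeff v (C k * X 0 ^ i * X 1 ^ j : MvPolynomial (Fin 2) ℝ) = if v 0 = i ∧ v 1 = j then k else 0 := by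
  have h : (C k * X 0 ^ i * X 1 ^ j : MvPolynomial (Fin 2) ℝ) = monomial (sm i j) k := by
    rw [sm, C_apply, X_pow_eq_monomial, X_pow_eq_monomial, monomial_mul, monomial_mul,
      mul_one, mul_one, zero_add]
  rw [h, coeff_monomial]
  simp only [sm_eq_iff]

lemma coeff_zero_of_big (v : Fin 2 →₀ ℕ) (p : MvPolynomial (Fin 2) ℝ)
    (hp : p.totalDegree ≤ 3) (h : 3 < v 0 + v 1) : coeff v p = 0 := by
  apply coeff_eq_zero_of_totalDegree_lt
  calc p.totalDegree ≤ 3 := hp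
    _ < v 0 + v 1 := h
    _ ≤ ∑ i ∈ v.support, v i := by
        rw [show (v 0 + v 1 : ℕ) = ∑ i : Fin 2, v i by simp [Fin.sum_univ_two]]
        exact (Finset.sum_subset (Finset.subset_univ _)
          (fun x _ hx => Finsupp.notMem_support_iff.mp hx)).ge

lemma integ5 (c0 c1 c2 c3 c4 t : ℝ) :
    (∫ x in (0:ℝ)..t, (c0 + c1*x + c2*x^2 + c3*x^3 + c4*x^4)) =
      c0*t + c1*t^2/2 + c2*t^3/3 + c3*t^4/4 + c4*t^5/5 := by
  have h : ∀ x : ℝ, HasDerivAt (fun x : ℝ => c0*x + c1*x^2/2 + c2*x^3/3 + c3*x^4/4 + c4*x^5/5)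
      (c0 + c1*x + c2*x^2 + c3*x^3 + c4*x^4) x := by
    intro x
    have h1 : HasDerivAt (fun x : ℝ => c0*x + c1*x^2/2 + c2*x^3/3 + c3*x^4/4 + c4*x^5/5)
        (c0*1 + c1*(2*x^1)/2 + c2*(3*x^2)/3 + c3*(4*x^3)/4 + c4*(5*x^4)/5) x :=
      ((((((hasDerivAt_id x).const_mul c0).add (((hasDerivAt_pow 2 x).const_mul c1).div_const 2)).add
        (((hasDerivAt_pow 3 x).const_mul c2).div_const 3)).add
        (((hasDerivAt_pow 4 x).const_mul c3).div_const 4)).add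
        (((hasDerivAt_pow 5 x).const_mul c4).div_const 5))
    convert h1 using 1; ring
  rw [intervalIntegral.integral_eq_sub_of_hasDerivAt (fun x _ => h x)
    ((Continuous.intervalIntegrable (by continuity)) 0 t)]
  ring

set_option maxHeartbeats 4000000 in
/-- unisolvency of the 12 degrees of freedom
(vertex values, edge integrals, edge integrals of the normal derivative)
for the plate element on `K = [0,a] × [0,b]`. -/
theorem stmt0 (a b : ℝ) (ha : 0 < a) (hb : 0 < b)
    (w : MvPolynomial (Fin 2) ℝ) (hw : memWK w)
    (hV1 : eval ![(0:ℝ), 0] w = 0)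
    (hV2 : eval ![a, 0] w = 0)
    (hV3 : eval ![a, b] w = 0)
    (hV4 : eval ![(0:ℝ), b] w = 0)
    (hE1 : (∫ x in (0:ℝ)..a, eval ![x, 0] w) = 0)
    (hE3 : (∫ x in (0:ℝ)..a, eval ![x, b] w) = 0)
    (hE2 : (∫ y in (0:ℝ)..b, eval ![a, y] w) = 0)
    (hE4 : (∫ y in (0:ℝ)..b, eval ![(0:ℝ), y] w) = 0)
    (hN1 : (∫ x in (0:ℝ)..a, eval ![x, 0] (pderiv 1 w)) = 0)
    (hN3 : (∫ x in (0:ℝ)..a, eval ![x, b] (pderiv 1 w)) = 0)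
    (hN2 : (∫ y in (0:ℝ)..b, eval ![a, y] (pderiv 0 w)) = 0)
    (hN4 : (∫ y in (0:ℝ)..b, eval ![(0:ℝ), y] (pderiv 0 w)) = 0) :
    w = 0 := by
  obtain ⟨p, c, d, hp, hwpd⟩ := hw
  set k00 := MvPolynomial.coeff (sm 0 0) w with hk00
  set k10 := MvPolynomial.coeff (sm 1 0) w with hk10
  set k01 := MvPolynomial.coeff (sm 0 1) w with hk01
  set k20 := MvPolynomial.coeff (sm 2 0) w with hk20
  set k11 := MvPolynomial.coeff (sm 1 1) w with hk11
  set k02 := MvPolynomial.coeff (sm 0 2) w with hk02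
  set k30 := MvPolynomial.coeff (sm 3 0) w with hk30
  set k21 := MvPolynomial.coeff (sm 2 1) w with hk21
  set k12 := MvPolynomial.coeff (sm 1 2) w with hk12
  set k03 := MvPolynomial.coeff (sm 0 3) w with hk03
  set k40 := MvPolynomial.coeff (sm 4 0) w with hk40
  set k04 := MvPolynomial.coeff (sm 0 4) w with hk04
  have hbig : ∀ v : Fin 2 →₀ ℕ, 3 < v 0 + v 1 → coeff v w =
      (if v 0 = 4 ∧ v 1 = 0 then c else 0) + (if v 0 = 0 ∧ v 1 = 4 then d else 0) := by
    intro v h3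
    rw [hwpd, coeff_add, coeff_add, coeff_zero_of_big v p hp h3,
      show (C c * X 0 ^ 4 : MvPolynomial (Fin 2) ℝ) = C c * X 0 ^ 4 * X 1 ^ 0 by ring,
      show (C d * X 1 ^ 4 : MvPolynomial (Fin 2) ℝ) = C d * X 0 ^ 0 * X 1 ^ 4 by ring,
      coeff_CXX, coeff_CXX, zero_add]
  have hc40 : k40 = c := by
    rw [hk40, hbig (sm 4 0) (by simp [sm_apply0, sm_apply1])]
    simp [sm_apply0, sm_apply1]
  have hc04 : k04 = d := by
    rw [hk04, hbig (sm 0 4) (by simp [sm_apply0, sm_apply1])]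
    simp [sm_apply0, sm_apply1]
  have hrep : w = C k00 * X 0 ^ 0 * X 1 ^ 0 + C k10 * X 0 ^ 1 * X 1 ^ 0 + C k01 * X 0 ^ 0 * X 1 ^ 1 + C k20 * X 0 ^ 2 * X 1 ^ 0 + C k11 * X 0 ^ 1 * X 1 ^ 1 + C k02 * X 0 ^ 0 * X 1 ^ 2 + C k30 * X 0 ^ 3 * X 1 ^ 0 + C k21 * X 0 ^ 2 * X 1 ^ 1 + C k12 * X 0 ^ 1 * X 1 ^ 2 + C k03 * X 0 ^ 0 * X 1 ^ 3 + C k40 * X 0 ^ 4 * X 1 ^ 0 + C k04 * X 0 ^ 0 * X 1 ^ 4 := by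
    apply MvPolynomial.ext
    intro v
    simp only [coeff_add, coeff_CXX]
    by_cases hle : v 0 + v 1 ≤ 3
    · have hv := eq_sm v
      obtain ⟨n, hn⟩ : ∃ n, v 0 = n := ⟨_, rfl⟩
      obtain ⟨m, hm⟩ : ∃ m, v 1 = m := ⟨_, rfl⟩
      rw [hn, hm] at hv hle ⊢
      rw [hv]
      have hn3 : n ≤ 3 := by omega
      have hm3 : m ≤ 3 := by omega
      interval_cases n <;> interval_cases m <;>
        first
          | omega
          | simp only [Nat.reduceEqDiff, and_true, true_and, and_false, false_and,
              if_true, if_false, reduceIte, add_zero, zero_add, hk00, hk10, hk01, hk20, hk11, hk02, hk30, hk21, hk12, hk03, hk40, hk04]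
    · have h3 : 3 < v 0 + v 1 := by omega
      rw [hbig v h3, ← hc40, ← hc04]
      split_ifs <;> first | omega | norm_num
  have fE1 : ∀ x : ℝ, eval ![x, (0:ℝ)] w = k00 + k10*x + k20*x^2 + k30*x^3 + k40*x^4 := by
    intro x; rw [hrep]; simp; try ring
  have fE3 : ∀ x : ℝ, eval ![x, b] w = (k00 + k01*b + k02*b^2 + k03*b^3 + k04*b^4) + (k10 + k11*b + k12*b^2)*x + (k20 + k21*b)*x^2 + k30*x^3 + k40*x^4 := by
    intro x; rw [hrep]; simp; try ring
  have fE2 : ∀ x : ℝ, eval ![a, x] w = (k00 + k10*a + k20*a^2 + k30*a^3 + k40*a^4) + (k01 + k11*a + k21*a^2)*x + (k02 + k12*a)*x^2 + k03*x^3 + k04*x^4 := by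
    intro x; rw [hrep]; simp; try ring
  have fE4 : ∀ x : ℝ, eval ![(0:ℝ), x] w = k00 + k01*x + k02*x^2 + k03*x^3 + k04*x^4 := by
    intro x; rw [hrep]; simp; try ring
  have fN1 : ∀ x : ℝ, eval ![x, (0:ℝ)] (pderiv 1 w) = k01 + k11*x + k21*x^2 + (0:ℝ)*x^3 + (0:ℝ)*x^4 := by
    intro x; rw [hrep]; simp [pderiv_mul, pderiv_pow, pderiv_X, pderiv_C]; try ring
  have fN3 : ∀ x : ℝ, eval ![x, b] (pderiv 1 w) = (k01 + 2*k02*b + 3*k03*b^2 + 4*k04*b^3) + (k11 + 2*k12*b)*x + k21*x^2 + (0:ℝ)*x^3 + (0:ℝ)*x^4 := by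
    intro x; rw [hrep]; simp [pderiv_mul, pderiv_pow, pderiv_X, pderiv_C]; try ring
  have fN2 : ∀ x : ℝ, eval ![a, x] (pderiv 0 w) = (k10 + 2*k20*a + 3*k30*a^2 + 4*k40*a^3) + (k11 + 2*k21*a)*x + k12*x^2 + (0:ℝ)*x^3 + (0:ℝ)*x^4 := by
    intro x; rw [hrep]; simp [pderiv_mul, pderiv_pow, pderiv_X, pderiv_C]; try ring
  have fN4 : ∀ x : ℝ, eval ![(0:ℝ), x] (pderiv 0 w) = k10 + k11*x + k12*x^2 + (0:ℝ)*x^3 + (0:ℝ)*x^4 := by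
    intro x; rw [hrep]; simp [pderiv_mul, pderiv_pow, pderiv_X, pderiv_C]; try ring
  rw [intervalIntegral.integral_congr (fun x _ => fE1 x), integ5] at hE1
  rw [intervalIntegral.integral_congr (fun x _ => fE3 x), integ5] at hE3
  rw [intervalIntegral.integral_congr (fun x _ => fE2 x), integ5] at hE2
  rw [intervalIntegral.integral_congr (fun x _ => fE4 x), integ5] at hE4
  rw [intervalIntegral.integral_congr (fun x _ => fN1 x), integ5] at hN1
  rw [intervalIntegral.integral_congr (fun x _ => fN3 x), integ5] at hN3
  rw [intervalIntegral.integral_congr (fun x _ => fN2 x), integ5] at hN2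
  rw [intervalIntegral.integral_congr (fun x _ => fN4 x), integ5] at hN4
  rw [hrep] at hV1; simp at hV1
  rw [hrep] at hV2; simp at hV2
  rw [hrep] at hV3; simp at hV3
  rw [hrep] at hV4; simp at hV4
  have eV1 : k00 = 0 := by linear_combination hV1
  have eV2 : k00 + k10*a + k20*a^2 + k30*a^3 + k40*a^4 = 0 := by linear_combination hV2
  have eV3 : k00 + k10*a + k01*b + k20*a^2 + k11*a*b + k02*b^2 + k30*a^3 + k21*a^2*b + k12*a*b^2 + k03*b^3 + k40*a^4 + k04*b^4 = 0 := by linear_combination hV3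
  have eV4 : k00 + k01*b + k02*b^2 + k03*b^3 + k04*b^4 = 0 := by linear_combination hV4
  have eI1 : k00*a/1 + k10*a^2/2 + k20*a^3/3 + k30*a^4/4 + k40*a^5/5 = 0 := by linear_combination hE1
  have eI3 : k00*a/1 + k10*a^2/2 + k01*a*b/1 + k20*a^3/3 + k11*a^2*b/2 + k02*a*b^2/1 + k30*a^4/4 + k21*a^3*b/3 + k12*a^2*b^2/2 + k03*a*b^3/1 + k40*a^5/5 + k04*a*b^4/1 = 0 := by linear_combination hE3
  have eI2 : k00*b/1 + k10*a*b/1 + k01*b^2/2 + k20*a^2*b/1 + k11*a*b^2/2 + k02*b^3/3 + k30*a^3*b/1 + k21*a^2*b^2/2 + k12*a*b^3/3 + k03*b^4/4 + k40*a^4*b/1 + k04*b^5/5 = 0 := by linear_combination hE2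
  have eI4 : k00*b/1 + k01*b^2/2 + k02*b^3/3 + k03*b^4/4 + k04*b^5/5 = 0 := by linear_combination hE4
  have eN1 : k01*a/1 + k11*a^2/2 + k21*a^3/3 = 0 := by linear_combination hN1
  have eN3 : 1*k01*a/1 + 1*k11*a^2/2 + 2*k02*a*b/1 + 1*k21*a^3/3 + 2*k12*a^2*b/2 + 3*k03*a*b^2/1 + 4*k04*a*b^3/1 = 0 := by linear_combination hN3
  have eN2 : 1*k10*b/1 + 2*k20*a*b/1 + 1*k11*b^2/2 + 3*k30*a^2*b/1 + 2*k21*a*b^2/2 + 1*k12*b^3/3 + 4*k40*a^3*b/1 = 0 := by linear_combination hN2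
  have eN4 : k10*b/1 + k11*b^2/2 + k12*b^3/3 = 0 := by linear_combination hN4
  have z00 : k00 * (a^1*b^1) = 0 := by
    linear_combination ((1 : ℝ) * (a*b)) * eV1
  have z10 : k10 * (a^2*b^1) = 0 := by
    linear_combination ((-5/2 : ℝ) * (a*b)) * eV1 + ((-1/2 : ℝ) * (a*b)) * eV2 + ((3/2 : ℝ) * (a*b)) * eV3 + ((3/2 : ℝ) * (a*b)) * eV4 + ((3 : ℝ) * b) * eI1 + ((-3 : ℝ) * b) * eI3 + ((-1 : ℝ) * a) * eI2 + ((1 : ℝ) * a) * eI4 + ((1 : ℝ) * a^2) * eN4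
  have z01 : k01 * (a^1*b^2) = 0 := by
    linear_combination ((-5/2 : ℝ) * (a*b)) * eV1 + ((3/2 : ℝ) * (a*b)) * eV2 + ((3/2 : ℝ) * (a*b)) * eV3 + ((-1/2 : ℝ) * (a*b)) * eV4 + ((1 : ℝ) * b) * eI1 + ((-1 : ℝ) * b) * eI3 + ((-3 : ℝ) * a) * eI2 + ((3 : ℝ) * a) * eI4 + ((1 : ℝ) * b^2) * eN1
  have z20 : k20 * (a^3*b^1) = 0 := by
    linear_combination ((-6 : ℝ) * (a*b)) * eV1 + ((-6 : ℝ) * (a*b)) * eV2 + ((-9 : ℝ) * (a*b)) * eV3 + ((-9 : ℝ) * (a*b)) * eV4 + ((12 : ℝ) * b) * eI1 + ((18 : ℝ) * b) * eI3 + ((3 : ℝ) * a) * eI2 + ((-3 : ℝ) * a) * eI4 + ((3/2 : ℝ) * a^2) * eN2 + ((-9/2 : ℝ) * a^2) * eN4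
  have z11 : k11 * (a^2*b^2) = 0 := by
    linear_combination ((7 : ℝ) * (a*b)) * eV1 + ((-1 : ℝ) * (a*b)) * eV2 + ((-5 : ℝ) * (a*b)) * eV3 + ((-1 : ℝ) * (a*b)) * eV4 + ((-6 : ℝ) * b) * eI1 + ((6 : ℝ) * b) * eI3 + ((6 : ℝ) * a) * eI2 + ((-6 : ℝ) * a) * eI4
  have z02 : k02 * (a^1*b^3) = 0 := by
    linear_combination ((-6 : ℝ) * (a*b)) * eV1 + ((-9 : ℝ) * (a*b)) * eV2 + ((-9 : ℝ) * (a*b)) * eV3 + ((-6 : ℝ) * (a*b)) * eV4 + ((-3 : ℝ) * b) * eI1 + ((3 : ℝ) * b) * eI3 + ((18 : ℝ) * a) * eI2 + ((12 : ℝ) * a) * eI4 + ((-9/2 : ℝ) * b^2) * eN1 + ((3/2 : ℝ) * b^2) * eN3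
  have z30 : k30 * (a^4*b^1) = 0 := by
    linear_combination ((15 : ℝ) * (a*b)) * eV1 + ((15 : ℝ) * (a*b)) * eV2 + ((15 : ℝ) * (a*b)) * eV3 + ((15 : ℝ) * (a*b)) * eV4 + ((-30 : ℝ) * b) * eI1 + ((-30 : ℝ) * b) * eI3 + ((-2 : ℝ) * a) * eI2 + ((2 : ℝ) * a) * eI4 + ((-4 : ℝ) * a^2) * eN2 + ((6 : ℝ) * a^2) * eN4
  have z21 : k21 * (a^3*b^2) = 0 := by
    linear_combination ((-3 : ℝ) * (a*b)) * eV1 + ((-3 : ℝ) * (a*b)) * eV2 + ((3 : ℝ) * (a*b)) * eV3 + ((3 : ℝ) * (a*b)) * eV4 + ((6 : ℝ) * b) * eI1 + ((-6 : ℝ) * b) * eI3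
  have z12 : k12 * (a^2*b^3) = 0 := by
    linear_combination ((-3 : ℝ) * (a*b)) * eV1 + ((3 : ℝ) * (a*b)) * eV2 + ((3 : ℝ) * (a*b)) * eV3 + ((-3 : ℝ) * (a*b)) * eV4 + ((-6 : ℝ) * a) * eI2 + ((6 : ℝ) * a) * eI4
  have z03 : k03 * (a^1*b^4) = 0 := by
    linear_combination ((15 : ℝ) * (a*b)) * eV1 + ((15 : ℝ) * (a*b)) * eV2 + ((15 : ℝ) * (a*b)) * eV3 + ((15 : ℝ) * (a*b)) * eV4 + ((2 : ℝ) * b) * eI1 + ((-2 : ℝ) * b) * eI3 + ((-30 : ℝ) * a) * eI2 + ((-30 : ℝ) * a) * eI4 + ((6 : ℝ) * b^2) * eN1 + ((-4 : ℝ) * b^2) * eN3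
  have z40 : k40 * (a^5*b^1) = 0 := by
    linear_combination ((-15/2 : ℝ) * (a*b)) * eV1 + ((-15/2 : ℝ) * (a*b)) * eV2 + ((-15/2 : ℝ) * (a*b)) * eV3 + ((-15/2 : ℝ) * (a*b)) * eV4 + ((15 : ℝ) * b) * eI1 + ((15 : ℝ) * b) * eI3 + ((5/2 : ℝ) * a^2) * eN2 + ((-5/2 : ℝ) * a^2) * eN4
  have z04 : k04 * (a^1*b^5) = 0 := by
    linear_combination ((-15/2 : ℝ) * (a*b)) * eV1 + ((-15/2 : ℝ) * (a*b)) * eV2 + ((-15/2 : ℝ) * (a*b)) * eV3 + ((-15/2 : ℝ) * (a*b)) * eV4 + ((15 : ℝ) * a) * eI2 + ((15 : ℝ) * a) * eI4 + ((-5/2 : ℝ) * b^2) * eN1 + ((5/2 : ℝ) * b^2) * eN3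
  have t00 : k00 = 0 := (mul_eq_zero.mp z00).resolve_right (by positivity)
  have t10 : k10 = 0 := (mul_eq_zero.mp z10).resolve_right (by positivity)
  have t01 : k01 = 0 := (mul_eq_zero.mp z01).resolve_right (by positivity)
  have t20 : k20 = 0 := (mul_eq_zero.mp z20).resolve_right (by positivity)
  have t11 : k11 = 0 := (mul_eq_zero.mp z11).resolve_right (by positivity)
  have t02 : k02 = 0 := (mul_eq_zero.mp z02).resolve_right (by positivity)
  have t30 : k30 = 0 := (mul_eq_zero.mp z30).resolve_right (by positivity)
  have t21 : k21 = 0 := (mul_eq_zero.mp z21).resolve_right (by positivity)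
  have t12 : k12 = 0 := (mul_eq_zero.mp z12).resolve_right (by positivity)
  have t03 : k03 = 0 := (mul_eq_zero.mp z03).resolve_right (by positivity)
  have t40 : k40 = 0 := (mul_eq_zero.mp z40).resolve_right (by positivity)
  have t04 : k04 = 0 := (mul_eq_zero.mp z04).resolve_right (by positivity)
  rw [hrep, t00, t10, t01, t20, t11, t02, t30, t21, t12, t03, t40, t04]
  simp
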